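/- arXiv:1501.06808 — 10 statements merged into one kernel-verified Lean document; each statement's English description precedes it below -/
import Mathlib

section
/- Let F be an Oka family of two-sided ideals in a ring R. Then every ideal that is maximal with respect to not belonging to F is a prime ideal. -/
variable {R : Type*} [Ring R]

/-- A left ideal `I` is two-sided if it is also closed under right multiplication. -/
def IsTwoSided (I : Ideal R) : Prop := ∀ x ∈ I, ∀ r : R, x * r ∈ I

/-- The two-sided ideal `(a)` generated by an element `a`. -/
def twoGen (a : R) : Ideal R := Ideal.span {x : R | ∃ r s : R, x = r * a * s}

/-- The ideal `(a)⁻¹I = {x : R | (a)·x ⊆ I}`. -/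
def preQuot (a : R) (I : Ideal R) : Ideal R where
  carrier := {x : R | ∀ r s : R, r * a * s * x ∈ I}
  add_mem' := by
    intro x y hx hy r s
    simpa [mul_add] using I.add_mem (hx r s) (hy r s)
  zero_mem' := by
    intro r s
    simpa using I.zero_mem
  smul_mem' := by
    intro c x hx r s
    have := hx r (s * c)
    simpa [smul_eq_mul, mul_assoc] using this

/-- The ideal `I(a)⁻¹ = {x : R | x·(a) ⊆ I}`. -/
def postQuot (a : R) (I : Ideal R) : Ideal R where
  carrier := {x : R | ∀ r s : R, x * (r * a * s) ∈ I}
  add_mem' := by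
    intro x y hx hy r s
    simpa [add_mul] using I.add_mem (hx r s) (hy r s)
  zero_mem' := by
    intro r s
    simpa using I.zero_mem
  smul_mem' := by
    intro c x hx r s
    simpa [smul_eq_mul, mul_assoc] using I.mul_mem_left c (hx r s)

/-- A two-sided ideal `P` is prime: it is proper, and `AB ⊆ P` implies `A ⊆ P` or
`B ⊆ P` for two-sided ideals `A`, `B`. -/
def IsPrimeTwoSided (P : Ideal R) : Prop :=
  IsTwoSided P ∧ P ≠ ⊤ ∧
    ∀ A B : Ideal R, IsTwoSided A → IsTwoSided B → A * B ≤ P → A ≤ P ∨ B ≤ P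

/-- An Oka family of (two-sided) ideals: it contains `R`, and for every two-sided
ideal `I` and element `a`, if `(I,a)`, `(a)⁻¹I` and `I(a)⁻¹` all belong to the
family, then so does `I`. -/
def IsOka (F : Set (Ideal R)) : Prop :=
  (⊤ : Ideal R) ∈ F ∧
    ∀ I : Ideal R, IsTwoSided I → ∀ a : R,
      I ⊔ twoGen a ∈ F → preQuot a I ∈ F → postQuot a I ∈ F → I ∈ F

lemma mem_twoGen_self (a : R) : a ∈ twoGen a :=
  Ideal.subset_span ⟨1, 1, by simp⟩

lemma twoGen_isTwoSided (a : R) : IsTwoSided (twoGen a) := by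
  intro x hx t
  induction hx using Submodule.span_induction with
  | mem x h =>
    obtain ⟨r, s, rfl⟩ := h
    exact Ideal.subset_span ⟨r, s * t, by simp [mul_assoc]⟩
  | zero => simpa using (twoGen a).zero_mem
  | add x y _ _ hx hy => simpa [add_mul] using (twoGen a).add_mem hx hy
  | smul c x _ hx => simpa [smul_eq_mul, mul_assoc] using (twoGen a).smul_mem c hx

lemma oka_key (F : Set (Ideal R)) (hF : IsOka F) (P : Ideal R)
    (hP : IsTwoSided P)
    (hmax : ∀ J : Ideal R, IsTwoSided J → P < J → J ∈ F)
    (a w : R) (ha : a ∉ P) (hw : w ∉ P)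
    (h1 : ∀ r s : R, r * a * s * w ∈ P)
    (h2 : ∀ r s : R, w * (r * a * s) ∈ P) : P ∈ F := by
  apply hF.2 P hP a
  · -- P ⊔ twoGen a ∈ F
    apply hmax
    · intro x hx t
      rcases Submodule.mem_sup.mp hx with ⟨p, hp, q, hq, rfl⟩
      exact Submodule.mem_sup.mpr ⟨p * t, hP p hp t, q * t, twoGen_isTwoSided a q hq t,
        (add_mul p q t).symm⟩
    · refine lt_of_le_of_ne le_sup_left (fun h => ha ?_)
      exact h ▸ Submodule.mem_sup.mpr ⟨0, P.zero_mem, a, mem_twoGen_self a, by simp⟩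
  · -- preQuot a P ∈ F
    apply hmax
    · intro x hx t r s
      have := hP _ (hx r s) t
      simpa [mul_assoc] using this
    · refine lt_of_le_of_ne (fun x hx r s => P.smul_mem (r * a * s) hx) (fun h => hw ?_)
      exact h ▸ h1
  · -- postQuot a P ∈ F
    apply hmax
    · intro x hx t r s
      simpa [mul_assoc] using hx (t * r) s
    · refine lt_of_le_of_ne (fun x hx r s => hP x hx (r * a * s)) (fun h => hw ?_)
      exact h ▸ h2

/-- **Prime Ideal Principle.** If `F` is an Oka family of ideals of `R`,
then any (two-sided) ideal maximal with respect to not belonging to `F` is prime. -/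
theorem prime_ideal_principle (F : Set (Ideal R)) (hF : IsOka F) (P : Ideal R)
    (hP : IsTwoSided P) (hPF : P ∉ F)
    (hmax : ∀ J : Ideal R, IsTwoSided J → P < J → J ∈ F) :
    IsPrimeTwoSided P := by
  refine ⟨hP, fun h => hPF (h ▸ hF.1), ?_⟩
  intro A B hA hB hAB
  by_contra h
  push_neg at h
  obtain ⟨hAP, hBP⟩ := h
  obtain ⟨a, haA, haP⟩ := SetLike.not_le_iff_exists.mp hAP
  obtain ⟨b, hbB, hbP⟩ := SetLike.not_le_iff_exists.mp hBP
  have hab : ∀ r : R, a * r * b ∈ P := fun r => by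
    have : a * (r * b) ∈ A * B := Ideal.mul_mem_mul haA (B.smul_mem r hbB)
    exact hAB (by simpa [mul_assoc] using this)
  by_cases hba : ∀ r : R, b * r * a ∈ P
  · -- both quotients at `a` contain `b`
    refine hPF (oka_key F hF P hP hmax a b haP hbP ?_ ?_)
    · intro r s
      simpa [mul_assoc] using P.smul_mem r (hab s)
    · intro r s
      simpa [mul_assoc] using hP _ (hba r) s
  · push_neg at hba
    obtain ⟨r₀, hr₀⟩ := hba
    set c := b * r₀ * a with hc
    have hcc : ∀ t : R, c * t * c ∈ P := by
      intro t
      have h1 : a * t * b ∈ P := hab t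
      have h2 : (b * r₀) * (a * t * b) ∈ P := P.smul_mem _ h1
      have h3 : ((b * r₀) * (a * t * b)) * (r₀ * a) ∈ P := hP _ h2 _
      simpa [hc, mul_assoc] using h3
    refine hPF (oka_key F hF P hP hmax c c hr₀ hr₀ ?_ ?_)
    · intro r s
      simpa [mul_assoc] using P.smul_mem r (hcc s)
    · intro r s
      simpa [mul_assoc] using hP _ (hcc r) s
end

section
/- For any ring R, the family F = {I ⊴ R : for all ideals X, Y of R, XIY = 0 implies XY = 0} is a monoidal semifilter. Consequently, a maximal middle annihilator of R is prime. -/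
variable {R : Type*} [Ring R]

/-- The product of a left ideal with a two-sided ideal is two-sided. -/
lemma isTwoSided_mul {I J : Ideal R} (hJ : IsTwoSided J) : IsTwoSided (I * J) := by
  intro x hx r
  refine Submodule.mul_induction_on hx (fun m hm n hn => ?_) (fun a b ha hb => ?_)
  · rw [mul_assoc]
    exact Submodule.mul_mem_mul hm (hJ n hn r)
  · rw [add_mul]
    exact add_mem ha hb

/-- Elementwise characterization of `X * I * Y = ⊥`. -/
lemma triple_bot_iff (X I Y : Ideal R) :
    X * I * Y = ⊥ ↔ ∀ x ∈ X, ∀ i ∈ I, ∀ y ∈ Y, x * i * y = 0 := by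
  rw [eq_bot_iff]
  constructor
  · intro h x hx i hi y hy
    exact (Submodule.mem_bot R).1
      (h (Submodule.mul_mem_mul (Submodule.mul_mem_mul hx hi) hy))
  · intro h
    rw [Submodule.mul_le]
    intro w hw y hy
    rw [Submodule.mem_bot]
    refine Submodule.mul_induction_on hw (fun m hm n hn => h m hm n hn y hy)
      (fun a b ha hb => ?_)
    rw [add_mul, ha, hb, add_zero]

/-- Elementwise characterization of `X * Y = ⊥`. -/
lemma double_bot_iff (X Y : Ideal R) :
    X * Y = ⊥ ↔ ∀ x ∈ X, ∀ y ∈ Y, x * y = 0 := by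
  rw [eq_bot_iff, Submodule.mul_le]
  constructor
  · intro h x hx y hy
    exact (Submodule.mem_bot R).1 (h x hx y hy)
  · intro h x hx y hy
    exact (Submodule.mem_bot R).2 (h x hx y hy)

/-- The middle annihilator of `X'` and `Y`, as an ideal, when `X'` is two-sided. -/
def midAnn (X' Y : Ideal R) (hX' : IsTwoSided X') : Ideal R where
  carrier := {r : R | ∀ x ∈ X', ∀ y ∈ Y, x * r * y = 0}
  zero_mem' := by intro x hx y hy; simp
  add_mem' := by
    intro a b ha hb x hx y hy
    rw [mul_add, add_mul, ha x hx y hy, hb x hx y hy, add_zero]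
  smul_mem' := by
    intro c r hr x hx y hy
    have : x * (c * r) * y = (x * c) * r * y := by rw [mul_assoc x c r]
    rw [smul_eq_mul, this, hr (x * c) (hX' x hx c) y hy]

/-- The family `F = {I ⊴ R : XIY = 0 ⇒ XY = 0 for all ideals X, Y}`
is a monoidal semifilter; consequently, a maximal middle annihilator of `R` is prime.
Here the middle annihilator of ideals `X, Y` is `{r : R | XrY = 0}`, a middle
annihilator of `R` being one with `XY ≠ 0`. -/
theorem max_middle_annihilator_prime
    (F : Set (Ideal R))
    (hFdef : F = {I : Ideal R | IsTwoSided I ∧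
      ∀ X Y : Ideal R, IsTwoSided X → IsTwoSided Y → X * I * Y = ⊥ → X * Y = ⊥}) :
    (∀ I J : Ideal R, I ∈ F → J ∈ F → I * J ∈ F) ∧
    (∀ I J : Ideal R, I ∈ F → IsTwoSided J → I ≤ J → J ∈ F) ∧
    (∀ (P : Ideal R) (X Y : Ideal R), IsTwoSided X → IsTwoSided Y → X * Y ≠ ⊥ →
      (P : Set R) = {r : R | ∀ x ∈ X, ∀ y ∈ Y, x * r * y = 0} →
      (∀ (Q : Ideal R) (X' Y' : Ideal R), IsTwoSided X' → IsTwoSided Y' → X' * Y' ≠ ⊥ →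
        (Q : Set R) = {r : R | ∀ x ∈ X', ∀ y ∈ Y', x * r * y = 0} → P ≤ Q → Q = P) →
      IsPrimeTwoSided P) := by
  subst hFdef
  refine ⟨?_, ?_, ?_⟩
  · -- products
    rintro I J ⟨hI2, hI⟩ ⟨hJ2, hJ⟩
    refine ⟨isTwoSided_mul hJ2, ?_⟩
    intro X Y hX2 hY2 h
    rw [triple_bot_iff] at h
    apply hI X Y hX2 hY2
    apply hJ (X * I) Y (isTwoSided_mul hI2) hY2
    rw [triple_bot_iff]
    intro w hw j hj y hy
    refine Submodule.mul_induction_on hw (fun x hx i hi => ?_) (fun a b ha hb => ?_)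
    · have := h x hx (i * j) (Submodule.mul_mem_mul hi hj) y hy
      rw [← mul_assoc] at this
      exact this
    · rw [add_mul, add_mul, ha, hb, add_zero]
  · -- upward closed
    rintro I J ⟨hI2, hI⟩ hJ2 hIJ
    refine ⟨hJ2, ?_⟩
    intro X Y hX2 hY2 h
    rw [triple_bot_iff] at h
    apply hI X Y hX2 hY2
    rw [triple_bot_iff]
    exact fun x hx i hi y hy => h x hx i (hIJ hi) y hy
  · -- maximal middle annihilators are prime
    intro P X Y hX2 hY2 hXY hP hmax
    have hPmem : ∀ r : R, r ∈ P ↔ ∀ x ∈ X, ∀ y ∈ Y, x * r * y = 0 := by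
      intro r
      exact Set.ext_iff.1 hP r
    refine ⟨?_, ?_, ?_⟩
    · -- P is two-sided
      intro p hp r
      rw [hPmem] at hp ⊢
      intro x hx y hy
      have : x * (p * r) * y = x * p * (r * y) := by
        simp only [mul_assoc]
      rw [this, hp x hx (r * y) (Submodule.smul_mem Y r hy)]
    · -- P ≠ ⊤
      intro htop
      apply hXY
      rw [double_bot_iff]
      intro x hx y hy
      have h1 : (1 : R) ∈ P := htop ▸ Submodule.mem_top
      have := (hPmem 1).1 h1 x hx y hy
      rwa [mul_one] at this
    · -- primeness
      intro A B hA2 hB2 hAB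
      by_cases hAP : A ≤ P
      · exact Or.inl hAP
      right
      -- consider Q = midAnn (X*A) Y
      have hXA2 : IsTwoSided (X * A) := isTwoSided_mul hA2
      set Q := midAnn (X * A) Y hXA2 with hQdef
      have hQmem : ∀ r : R, r ∈ Q ↔ ∀ w ∈ X * A, ∀ y ∈ Y, w * r * y = 0 := fun r => Iff.rfl
      -- (X*A)*Y ≠ ⊥
      have hne : (X * A) * Y ≠ ⊥ := by
        intro hbot
        apply hAP
        intro a ha
        rw [hPmem]
        intro x hx y hy
        rw [double_bot_iff] at hbot
        exact hbot (x * a) (Submodule.mul_mem_mul hx ha) y hy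
      -- P ≤ Q
      have hPQ : P ≤ Q := by
        intro p hp
        rw [hQmem]
        intro w hw y hy
        refine Submodule.mul_induction_on hw (fun x hx a ha => ?_) (fun u v hu hv => ?_)
        · have hap : a * p ∈ P := Submodule.smul_mem P a hp
          have := (hPmem (a * p)).1 hap x hx y hy
          rw [← mul_assoc] at this
          exact this
        · rw [add_mul, add_mul, hu, hv, add_zero]
      -- maximality gives Q = P
      have hQP : Q = P := hmax Q (X * A) Y hXA2 hY2 hne rfl hPQ
      -- B ≤ Q
      intro b hb
      rw [← hQP, hQmem]
      intro w hw y hy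
      refine Submodule.mul_induction_on hw (fun x hx a ha => ?_) (fun u v hu hv => ?_)
      · have hab : a * b ∈ P := hAB (Submodule.mul_mem_mul ha hb)
        have := (hPmem (a * b)).1 hab x hx y hy
        rw [← mul_assoc] at this
        exact this
      · rw [add_mul, add_mul, hu, hv, add_zero]
end

section
/- The family F of two-sided ideals of a ring R having the right Artin-Rees property satisfies (P2): F is monoidal, and if J ∈ F and I is an ideal with I² ⊆ J ⊆ I, then I ∈ F. Consequently, an ideal maximal with respect to not having the right Artin-Rees property is prime. -/
variable {R : Type*} [Ring R]

/-- A (two-sided) ideal `I` has the right Artin-Rees property if for every right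
ideal `K` of `R` there is `n ≥ 1` with `K ∩ Iⁿ ⊆ KI`, where `KI` is the additive
subgroup generated by products `k * i`. -/
def HasRightAR (I : Ideal R) : Prop :=
  ∀ K : Submodule Rᵐᵒᵖ R, ∃ n : ℕ, 0 < n ∧
    (K : Set R) ∩ (I ^ n : Ideal R) ⊆
      (AddSubgroup.closure {z : R | ∃ k ∈ K, ∃ i ∈ I, z = k * i} : Set R)

/-!
For a right ideal `K` and an ideal `I`, write `KI` for the additive subgroup generated by the
products `k * i`; it is again a right ideal when `I` is two-sided.

If `I` and `J` have the property, take `m` for `K` and `I`, then `n` for the right ideal `KI`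
and `J`: an element of `K ∩ (IJ)^(m+n)` lies in `K ∩ I^m ⊆ KI`, hence in
`KI ∩ J^n ⊆ (KI)J ⊆ K(IJ)`. If `I² ⊆ J ⊆ I` and `J` has the property with exponent `n`, then
`K ∩ I^(2n) ⊆ K ∩ J^n ⊆ KJ ⊆ KI`. Finally, if `AB ⊆ P` with `A, B ⊄ P` and `P` is maximal
without the property, then `A + P` and `B + P` have it, hence so does their product `Q`, and
`P² ⊆ Q ⊆ P` gives the property to `P`.
-/

section Ideals

variable {I J A B P : Ideal R}

lemma isTwoSided_iff : IsTwoSided I ↔ I.IsTwoSided :=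
  ⟨fun h => ⟨fun b ha => h _ ha b⟩, fun _ _ hx r => I.mul_mem_right r hx⟩

lemma IsTwoSided.sup (hI : IsTwoSided I) (hJ : IsTwoSided J) : IsTwoSided (I ⊔ J) := by
  intro x hx r
  obtain ⟨a, ha, b, hb, rfl⟩ := Submodule.mem_sup.1 hx
  rw [add_mul]
  exact Submodule.add_mem_sup (hI a ha r) (hJ b hb r)

lemma sup_mul_sup_le (hP : IsTwoSided P) (hAB : A * B ≤ P) : (A ⊔ P) * (B ⊔ P) ≤ P := by
  have := isTwoSided_iff.1 hP
  simp only [Ideal.sup_mul, Ideal.mul_sup, sup_le_iff]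
  exact ⟨⟨hAB, Ideal.mul_le_left⟩, Ideal.mul_le_right, Ideal.mul_le_right⟩

lemma pow_two_mul_le_pow (h : I * I ≤ J) (n : ℕ) : I ^ (2 * n) ≤ J ^ n := by
  induction n with
  | zero => rfl
  | succ n ih =>
    rw [Nat.mul_succ, Submodule.pow_succ, Submodule.pow_succ, Submodule.pow_succ, mul_assoc]
    exact Ideal.mul_mono ih h

end Ideals

section RightIdealMul

variable {K : Submodule Rᵐᵒᵖ R} {I I' J : Ideal R}

def rightIdealMul (K : Submodule Rᵐᵒᵖ R) (I : Ideal R) : AddSubgroup R :=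
  AddSubgroup.closure {z : R | ∃ k ∈ K, ∃ i ∈ I, z = k * i}

lemma rightIdealMul_mono (h : I ≤ J) : rightIdealMul K I ≤ rightIdealMul K J :=
  AddSubgroup.closure_mono fun _ ⟨k, hk, i, hi, e⟩ => ⟨k, hk, i, h hi, e⟩

lemma mul_mem_rightIdealMul {r x : R} (hr : ∀ i ∈ I, i * r ∈ I') (hx : x ∈ rightIdealMul K I) :
    x * r ∈ rightIdealMul K I' := by
  have : rightIdealMul K I ≤ (rightIdealMul K I').comap (AddMonoidHom.mulRight r) :=
    AddSubgroup.closure_le _ |>.2 fun _ ⟨k, hk, i, hi, e⟩ =>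
      AddSubgroup.subset_closure ⟨k, hk, i * r, hr i hi, by simp [e, mul_assoc]⟩
  exact this hx

def rightIdealMulOfTwoSided (K : Submodule Rᵐᵒᵖ R) (hI : IsTwoSided I) : Submodule Rᵐᵒᵖ R where
  carrier := rightIdealMul K I
  add_mem' := add_mem
  zero_mem' := zero_mem _
  smul_mem' c _ hx := mul_mem_rightIdealMul (fun i hi => hI i hi c.unop) hx

lemma rightIdealMul_rightIdealMulOfTwoSided_le (hI : IsTwoSided I) :
    rightIdealMul (rightIdealMulOfTwoSided K hI) J ≤ rightIdealMul K (I * J) :=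
  AddSubgroup.closure_le _ |>.2 fun _ ⟨_, hk, _, hj, e⟩ =>
    e ▸ mul_mem_rightIdealMul (fun _ hi => Submodule.mul_mem_mul hi hj) hk

end RightIdealMul

lemma hasRightAR_top : HasRightAR (⊤ : Ideal R) := fun _ =>
  ⟨1, one_pos, fun x hx => AddSubgroup.subset_closure ⟨x, hx.1, 1, trivial, (mul_one x).symm⟩⟩

theorem HasRightAR.mul {I J : Ideal R} (hI : IsTwoSided I) (hIAR : HasRightAR I)
    (hJAR : HasRightAR J) : HasRightAR (I * J) := by
  intro K
  obtain ⟨m, hm, hKm⟩ := hIAR K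
  obtain ⟨n, -, hKn⟩ := hJAR (rightIdealMulOfTwoSided K hI)
  refine ⟨m + n, by omega, fun x ⟨hxK, hx⟩ => ?_⟩
  have := isTwoSided_iff.1 hI
  have hxI : x ∈ I ^ m :=
    Ideal.pow_le_pow_right (by omega) (Ideal.pow_right_mono Ideal.mul_le_left _ hx)
  have hxJ : x ∈ J ^ n :=
    Ideal.pow_le_pow_right (by omega) (Ideal.pow_right_mono Ideal.mul_le_right _ hx)
  have hxKI : x ∈ rightIdealMulOfTwoSided K hI := hKm ⟨hxK, hxI⟩
  exact rightIdealMul_rightIdealMulOfTwoSided_le hI (hKn ⟨hxKI, hxJ⟩)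

theorem HasRightAR.of_mul_self_le {I J : Ideal R} (hJAR : HasRightAR J) (hIIJ : I * I ≤ J)
    (hJI : J ≤ I) : HasRightAR I := by
  intro K
  obtain ⟨n, hn, hKn⟩ := hJAR K
  exact ⟨2 * n, by omega, fun x ⟨hxK, hx⟩ =>
    rightIdealMul_mono hJI (hKn ⟨hxK, pow_two_mul_le_pow hIIJ n hx⟩)⟩

theorem isPrimeTwoSided_of_maximal_not {F : Ideal R → Prop} (htop : F ⊤)
    (hmul : ∀ I J : Ideal R, IsTwoSided I → IsTwoSided J → F I → F J → F (I * J))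
    (hsq : ∀ I J : Ideal R, IsTwoSided I → IsTwoSided J → F J → I * I ≤ J → J ≤ I → F I)
    {P : Ideal R} (hP : IsTwoSided P) (hPF : ¬ F P)
    (hmax : ∀ Q : Ideal R, IsTwoSided Q → P < Q → F Q) : IsPrimeTwoSided P := by
  refine ⟨hP, fun h => hPF (h ▸ htop), fun A B hA hB hAB => ?_⟩
  by_contra! ⟨hAP, hBP⟩
  have hFsup : ∀ C : Ideal R, IsTwoSided C → ¬ C ≤ P → F (C ⊔ P) ∧ IsTwoSided (C ⊔ P) :=
    fun C hC hCP => ⟨hmax _ (hC.sup hP) (right_lt_sup.2 hCP), hC.sup hP⟩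
  obtain ⟨hFA, hA'⟩ := hFsup A hA hAP
  obtain ⟨hFB, hB'⟩ := hFsup B hB hBP
  have := isTwoSided_iff.1 hB'
  exact hPF <| hsq P _ hP (isTwoSided_iff.2 inferInstance) (hmul _ _ hA' hB' hFA hFB)
    (Ideal.mul_mono le_sup_right le_sup_right) (sup_mul_sup_le hP hAB)

/-- The family of two-sided ideals with the right Artin-Rees property
satisfies (P₂): it is monoidal, and if `J` has the property and `I² ⊆ J ⊆ I` then `I`
has it.  Consequently, an ideal maximal with respect to not having the right
Artin-Rees property is prime. -/
theorem artin_rees_P2 :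
    (∀ I J : Ideal R, IsTwoSided I → IsTwoSided J → HasRightAR I → HasRightAR J →
      HasRightAR (I * J)) ∧
    (∀ I J : Ideal R, IsTwoSided I → IsTwoSided J → HasRightAR J →
      I * I ≤ J → J ≤ I → HasRightAR I) ∧
    (∀ P : Ideal R, IsTwoSided P → ¬ HasRightAR P →
      (∀ Q : Ideal R, IsTwoSided Q → P < Q → HasRightAR Q) → IsPrimeTwoSided P) := by
  have hmul : ∀ I J : Ideal R, IsTwoSided I → IsTwoSided J → HasRightAR I → HasRightAR J →
      HasRightAR (I * J) := fun _ _ hI _ hIAR hJAR => hIAR.mul hI hJAR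
  have hsq : ∀ I J : Ideal R, IsTwoSided I → IsTwoSided J → HasRightAR J →
      I * I ≤ J → J ≤ I → HasRightAR I := fun _ _ _ _ hJAR hIIJ hJI => hJAR.of_mul_self_le hIIJ hJI
  exact ⟨hmul, hsq, fun _ hP => isPrimeTwoSided_of_maximal_not hasRightAR_top hmul hsq hP⟩
end

section
/- For any ring R, an ideal of R that is maximal with respect to not being an ideal direct summand (i.e., not generated by a central idempotent) is a maximal ideal. -/
variable {R : Type*} [Ring R]

/-- An ideal `I` is an ideal direct summand of `R` if `R = I ⊕ J` for some two-sided
ideal `J`. -/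
def IsIdealSummand (I : Ideal R) : Prop :=
  ∃ J : Ideal R, IsTwoSided J ∧ I ⊔ J = ⊤ ∧ I ⊓ J = ⊥

lemma IsTwoSided.sup_s10 {A B : Ideal R} (hA : IsTwoSided A) (hB : IsTwoSided B) :
    IsTwoSided (A ⊔ B) := by
  intro x hx r
  rcases Submodule.mem_sup.mp hx with ⟨a, ha, b, hb, rfl⟩
  rw [add_mul]
  exact Submodule.add_mem_sup (hA a ha r) (hB b hb r)

/-- An ideal maximal with respect to not being an ideal direct
summand is a maximal ideal. -/
theorem max_non_summand_is_maximal (P : Ideal R) (hP : IsTwoSided P)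
    (hPn : ¬ IsIdealSummand P)
    (hmax : ∀ Q : Ideal R, IsTwoSided Q → P < Q → IsIdealSummand Q) :
    P ≠ ⊤ ∧ ∀ Q : Ideal R, IsTwoSided Q → P < Q → Q = ⊤ := by
  constructor
  · rintro rfl
    exact hPn ⟨⊥, fun x hx r => by simp_all, by simp, by simp⟩
  · intro Q hQ hPQ
    by_contra hQtop
    obtain ⟨J, hJ, hQJsup, hQJinf⟩ := hmax Q hQ hPQ
    -- J ≰ P, else J = ⊥ and Q = ⊤
    have hJP : ¬ J ≤ P := by
      intro h
      have hJbot : J = ⊥ := by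
        rw [← le_bot_iff, ← hQJinf]
        exact le_inf (h.trans hPQ.le) le_rfl
      exact hQtop (by rw [← hQJsup, hJbot, sup_bot_eq])
    have hPlt : P < P ⊔ J := lt_of_le_of_ne le_sup_left
      (fun h => hJP (h ▸ le_sup_right))
    obtain ⟨K, hK, hsup, hinf⟩ := hmax (P ⊔ J) (hP.sup_s10 hJ) hPlt
    apply hPn
    refine ⟨J ⊔ K, hJ.sup_s10 hK, ?_, ?_⟩
    · rw [← sup_assoc]; exact hsup
    · rw [eq_bot_iff]
      rintro x ⟨hxP, hxJK⟩
      rcases Submodule.mem_sup.mp hxJK with ⟨j, hj, k, hk, rfl⟩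
      have hk0 : k = 0 := by
        have : k ∈ (P ⊔ J) ⊓ K := ⟨by
          have : (j + k) - j ∈ P ⊔ J :=
            Submodule.sub_mem _ (le_sup_left (α := Ideal R) hxP) (le_sup_right (α := Ideal R) hj)
          simpa using this, hk⟩
        simpa [hinf] using this
      have hj0 : j = 0 := by
        have : j ∈ Q ⊓ J := ⟨hPQ.le (by simpa [hk0] using hxP), hj⟩
        simpa [hQJinf] using this
      simp [hj0, hk0]
end

section
/- For any ring R, the family F = {I ⊴ R : R/I is Dedekind finite} satisfies (P3): if A, B ∈ F and I is an ideal with AB ⊆ I ⊆ A ∩ B, then I ∈ F. Consequently, an ideal maximal with respect to R/I not being Dedekind finite is prime. -/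
variable {R : Type*} [Ring R]

/-- For a two-sided ideal `I`, the quotient ring `R/I` is Dedekind finite precisely
when `1 - ab ∈ I` implies `1 - ba ∈ I`. -/
def DedekindFiniteQuot (I : Ideal R) : Prop :=
  ∀ a b : R, 1 - a * b ∈ I → 1 - b * a ∈ I

lemma df_P3_aux (A B I : Ideal R) (hA : IsTwoSided A) (hB : IsTwoSided B)
    (hI : IsTwoSided I) (hdA : DedekindFiniteQuot A) (hdB : DedekindFiniteQuot B)
    (hAB : A * B ≤ I) (hIAB : I ≤ A ⊓ B) : DedekindFiniteQuot I := by
  intro a b hab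
  have hbaA := hdA a b (hIAB hab).1
  have hbaB := hdB a b (hIAB hab).2
  have key : 1 - b * a = (1 - b * a) * (1 - b * a) + b * (1 - a * b) * a := by
    noncomm_ring
  rw [key]
  exact I.add_mem (hAB (Ideal.mul_mem_mul hbaA hbaB)) (hI _ (I.mul_mem_left b hab) a)

lemma sup_twoSided {A P : Ideal R} (hA : IsTwoSided A) (hP : IsTwoSided P) :
    IsTwoSided (P ⊔ A) := by
  intro x hx r
  rw [Submodule.mem_sup] at hx ⊢
  obtain ⟨p, hp, a, ha, rfl⟩ := hx
  exact ⟨p * r, hP p hp r, a * r, hA a ha r, (add_mul p a r).symm⟩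

/-- The family `F = {I ⊴ R : R/I is Dedekind finite}` satisfies
(P₃): if `A, B ∈ F` and `AB ⊆ I ⊆ A ∩ B` then `I ∈ F`.  Consequently, an ideal
maximal with respect to `R/I` not being Dedekind finite is prime. -/
theorem dedekind_finite_P3 :
    (∀ A B I : Ideal R, IsTwoSided A → IsTwoSided B → IsTwoSided I →
      DedekindFiniteQuot A → DedekindFiniteQuot B →
      A * B ≤ I → I ≤ A ⊓ B → DedekindFiniteQuot I) ∧
    (∀ P : Ideal R, IsTwoSided P → ¬ DedekindFiniteQuot P →
      (∀ Q : Ideal R, IsTwoSided Q → P < Q → DedekindFiniteQuot Q) →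
      IsPrimeTwoSided P) := by
  refine ⟨df_P3_aux, ?_⟩
  intro P hP hnd hmax
  refine ⟨hP, ?_, ?_⟩
  · rintro rfl
    exact hnd fun a b _ => Submodule.mem_top
  · intro A B hA hB hABP
    by_contra h
    push_neg at h
    obtain ⟨hAP, hBP⟩ := h
    have h2A : IsTwoSided (P ⊔ A) := sup_twoSided hA hP
    have h2B : IsTwoSided (P ⊔ B) := sup_twoSided hB hP
    have hmul : (P ⊔ A) * (P ⊔ B) ≤ P := by
      rw [Ideal.mul_le]
      intro x hx y hy
      rw [Submodule.mem_sup] at hx hy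
      obtain ⟨p, hp, a, ha, rfl⟩ := hx
      obtain ⟨q, hq, b, hb, rfl⟩ := hy
      have expand : (p + a) * (q + b) = p * (q + b) + (a * q + a * b) := by
        noncomm_ring
      rw [expand]
      exact P.add_mem (hP p hp (q + b))
        (P.add_mem (P.mul_mem_left a hq) (Ideal.mul_le.mp hABP a ha b hb))
    have hdfA := hmax (P ⊔ A) h2A (left_lt_sup.mpr hAP)
    have hdfB := hmax (P ⊔ B) h2B (left_lt_sup.mpr hBP)
    exact hnd (df_P3_aux (P ⊔ A) (P ⊔ B) P h2A h2B hP hdfA hdfB hmul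
      (le_inf le_sup_left le_sup_left))
end

section
/- For a ring R, let F = {I ⊴ R : the right R-module R/I is flat}. Then F satisfies (P3): if A, B ∈ F and I is an ideal with AB ⊆ I ⊆ A ∩ B, then I ∈ F. Consequently, an ideal P maximal with respect to R/P not being flat as a right module is prime. -/
variable {R : Type*} [Ring R]

/-- For a two-sided ideal `I`, the right `R`-module `R/I` is flat if and only if
`I ∩ L ⊆ IL` for every left ideal `L` of `R` (Lam, *Lectures on Modules and Rings*,
(4.14)).  We take this characterization as the definition of flatness of `R/I`. -/
def RightQuotientFlat (I : Ideal R) : Prop :=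
  ∀ L : Ideal R, I ⊓ L ≤ I * L

/-- The family `F = {I ⊴ R : (R/I)_R is flat}` satisfies (P₃):
if `A, B ∈ F` and `AB ⊆ I ⊆ A ∩ B` then `I ∈ F`.  Consequently, an ideal `P`
maximal with respect to `R/P` not being flat as a right module is prime. -/
theorem flat_quotient_P3 :
    (∀ A B I : Ideal R, IsTwoSided A → IsTwoSided B → IsTwoSided I →
      RightQuotientFlat A → RightQuotientFlat B →
      A * B ≤ I → I ≤ A ⊓ B → RightQuotientFlat I) ∧
    (∀ P : Ideal R, IsTwoSided P → ¬ RightQuotientFlat P →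
      (∀ Q : Ideal R, IsTwoSided Q → P < Q → RightQuotientFlat Q) →
      IsPrimeTwoSided P) := by

  constructor
  · -- (P₃)
    intro A B I _hA _hB _hI hAf hBf hABI hIAB L
    have h1 : I ⊓ L ≤ A ⊓ (B ⊓ L) := by
      intro x hx
      exact ⟨(hIAB hx.1).1, (hIAB hx.1).2, hx.2⟩
    have h2 : A ⊓ (B ⊓ L) ≤ A * (B ⊓ L) := hAf (B ⊓ L)
    have h3 : A * (B ⊓ L) ≤ A * (B * L) :=
      Ideal.mul_mono le_rfl (hBf L)
    have h4 : A * (B * L) ≤ I * L := by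
      rw [← mul_assoc]
      exact Ideal.mul_mono hABI le_rfl
    exact le_trans h1 (le_trans h2 (le_trans h3 h4))
  · intro P hP hPnf hPmax
    have hPtop : P ≠ ⊤ := by
      rintro rfl
      exact hPnf fun L x hx => by
        simpa using Ideal.mul_mem_mul (Submodule.mem_top (x := (1:R))) hx.2
    refine ⟨hP, hPtop, ?_⟩
    intro A B hA hB hABP
    by_contra hcon
    push_neg at hcon
    obtain ⟨hAP, hBP⟩ := hcon
    set A' := A ⊔ P with hA'
    set B' := B ⊔ P with hB'
    have hA'ts : IsTwoSided A' := by
      intro x hx r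
      rcases Submodule.mem_sup.mp hx with ⟨a, ha, p, hp, rfl⟩
      rw [add_mul]
      exact Submodule.add_mem_sup (hA a ha r) (hP p hp r)
    have hB'ts : IsTwoSided B' := by
      intro x hx r
      rcases Submodule.mem_sup.mp hx with ⟨b, hb, p, hp, rfl⟩
      rw [add_mul]
      exact Submodule.add_mem_sup (hB b hb r) (hP p hp r)
    have hA'gt : P < A' := lt_of_le_of_ne le_sup_right (by
      intro h
      exact hAP (le_sup_left.trans h.ge))
    have hB'gt : P < B' := lt_of_le_of_ne le_sup_right (by
      intro h
      exact hBP (le_sup_left.trans h.ge))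
    have hA'f : RightQuotientFlat A' := hPmax A' hA'ts hA'gt
    have hB'f : RightQuotientFlat B' := hPmax B' hB'ts hB'gt
    have hmul : A' * B' ≤ P := by
      rw [Ideal.mul_le]
      intro a ha b hb
      rcases Submodule.mem_sup.mp ha with ⟨a1, ha1, p1, hp1, rfl⟩
      rcases Submodule.mem_sup.mp hb with ⟨b1, hb1, p2, hp2, rfl⟩
      have t1 : a1 * b1 ∈ P := hABP (Ideal.mul_mem_mul ha1 hb1)
      have t2 : a1 * p2 ∈ P := P.smul_mem a1 hp2
      have t3 : p1 * b1 ∈ P := hP p1 hp1 b1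
      have t4 : p1 * p2 ∈ P := P.smul_mem p1 hp2
      have heq : (a1 + p1) * (b1 + p2) = a1 * b1 + a1 * p2 + (p1 * b1 + p1 * p2) := by
        rw [add_mul, mul_add, mul_add]
      exact heq ▸ add_mem (add_mem t1 t2) (add_mem t3 t4)
    have hle : P ≤ A' ⊓ B' := le_inf le_sup_right le_sup_right
    exact hPnf (fun L => by
      intro x hx
      have h1 : x ∈ A' ⊓ (B' ⊓ L) := ⟨(hle hx.1).1, (hle hx.1).2, hx.2⟩
      have h2 := hA'f (B' ⊓ L) h1
      have h3 : A' * (B' ⊓ L) ≤ A' * (B' * L) := Ideal.mul_mono le_rfl (hB'f L)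
      have h4 : A' * (B' * L) ≤ P * L := by
        rw [← mul_assoc]; exact Ideal.mul_mono hmul le_rfl
      exact h4 (h3 h2))
end

section
/- Let R be a ring and I an ideal with I ∩ L ⊆ IL for every left ideal L (i.e., R/I flat on the right). If A, B are ideals with this same property and AB ⊆ I ⊆ A ∩ B, then I ∩ L ⊆ IL for every left ideal L. -/
/-- Let `A, B, I` be ideals of `R` with `AB ⊆ I ⊆ A ∩ B`, where
`A ∩ L ⊆ AL` and `B ∩ L ⊆ BL` for every left ideal `L` (i.e. `R/A` and `R/B` are
flat on the right).  Then `I ∩ L ⊆ IL` for every left ideal `L`. -/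
theorem flat_quotient_inter {R : Type*} [Ring R] (I A B : Ideal R)
    (hA : ∀ L : Ideal R, A ⊓ L ≤ A * L) (hB : ∀ L : Ideal R, B ⊓ L ≤ B * L)
    (hAB : A * B ≤ I) (hIA : I ≤ A) (hIB : I ≤ B) :
    ∀ L : Ideal R, I ⊓ L ≤ I * L := by
  intro L
  calc I ⊓ L ≤ A ⊓ (B ⊓ L) := le_inf (inf_le_left.trans hIA)
        (le_inf (inf_le_left.trans hIB) inf_le_right)
    _ ≤ A ⊓ (B * L) := inf_le_inf_left _ (hB L)
    _ ≤ A * (B * L) := hA _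
    _ = (A * B) * L := (mul_assoc A B L).symm
    _ ≤ I * L := Ideal.mul_mono_left hAB
end

section
/- Let S be a multiplicatively closed set of normal elements in a ring R (containing 1). Then the family F = {(s) : s ∈ S} is a strongly r-Oka family: for ideals I, J, if I + J ∈ F and J^{-1}I ∈ F, then I ∈ F. -/
variable {R : Type*} [Ring R]

/-- An element `x` is normal if `xR = Rx`. -/
def IsNormal (x : R) : Prop :=
  Set.range (fun r : R => x * r) = Set.range (fun r : R => r * x)

/-- For a two-sided ideal `J` and an ideal `I`, the ideal `J⁻¹I = {x : R | Jx ⊆ I}`. -/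
def lquot (J I : Ideal R) (hJ : IsTwoSided J) : Ideal R where
  carrier := {x : R | ∀ j ∈ J, j * x ∈ I}
  add_mem' := by
    intro x y hx hy j hj
    rw [mul_add]
    exact I.add_mem (hx j hj) (hy j hj)
  zero_mem' := by
    intro j hj
    simpa using I.zero_mem
  smul_mem' := by
    intro c x hx j hj
    rw [smul_eq_mul, ← mul_assoc]
    exact hx (j * c) (hJ j hj c)

/-- If `S` is a multiplicatively closed set of normal elements of
`R` containing `1`, then the family `F = {(s) : s ∈ S}` is strongly r-Oka: for
two-sided ideals `I, J`, if `I + J ∈ F` and `J⁻¹I ∈ F` then `I ∈ F`.  (For a normal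
element `s`, the two-sided ideal `(s)` coincides with the left ideal `Rs = span {s}`.) -/
theorem normal_elements_strongly_rOka (S : Set R) (h1 : (1 : R) ∈ S)
    (hmul : ∀ s ∈ S, ∀ t ∈ S, s * t ∈ S)
    (hnorm : ∀ s ∈ S, IsNormal s)
    (I J : Ideal R) (hI : IsTwoSided I) (hJ : IsTwoSided J)
    (hsup : ∃ s ∈ S, I ⊔ J = Ideal.span {s})
    (hq : ∃ s ∈ S, lquot J I hJ = Ideal.span {s}) :
    ∃ s ∈ S, I = Ideal.span {s} := by
  obtain ⟨s, hs, hsup⟩ := hsup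
  obtain ⟨t, ht, hq⟩ := hq
  refine ⟨s * t, hmul s hs t ht, ?_⟩
  have htq : t ∈ lquot J I hJ := by
    rw [hq]; exact Ideal.subset_span rfl
  apply le_antisymm
  · intro x hx
    -- x ∈ I ⊆ (s) = Rs = sR, so x = s * r'
    have hxs : x ∈ Ideal.span {s} := hsup ▸ Ideal.mem_sup_left hx
    obtain ⟨r, hr⟩ := Submodule.mem_span_singleton.mp hxs
    have hx' : x ∈ Set.range (fun r : R => s * r) := by
      rw [hnorm s hs]; exact ⟨r, by simpa [smul_eq_mul] using hr⟩
    obtain ⟨r', hr'⟩ := hx'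
    simp only [] at hr'
    have hr'mem : r' ∈ lquot J I hJ := by
      intro j hj
      have hjs : j ∈ Ideal.span {s} := hsup ▸ Ideal.mem_sup_right hj
      obtain ⟨u, hu⟩ := Submodule.mem_span_singleton.mp hjs
      have : j * r' = u * x := by
        rw [← hu, smul_eq_mul, ← hr', mul_assoc]
      rw [this]
      exact I.mul_mem_left u hx
    rw [hq] at hr'mem
    obtain ⟨v, hv⟩ := Submodule.mem_span_singleton.mp hr'mem
    have hsv : s * v ∈ Set.range (fun r : R => r * s) := by
      rw [← hnorm s hs]; exact ⟨v, rfl⟩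
    obtain ⟨w, hw⟩ := hsv
    simp only [] at hw
    refine Submodule.mem_span_singleton.mpr ⟨w, ?_⟩
    rw [smul_eq_mul] at hv ⊢
    rw [← hr', ← hv, ← mul_assoc, hw, mul_assoc]
  · rw [Ideal.span_le, Set.singleton_subset_iff]
    have hsmem : s ∈ I ⊔ J := by
      rw [hsup]; exact Ideal.subset_span rfl
    obtain ⟨i, hi, j, hj, hij⟩ := Submodule.mem_sup.mp hsmem
    have : s * t = i * t + j * t := by rw [← hij, add_mul]
    rw [SetLike.mem_coe, this]
    exact I.add_mem (hI i hi t) (htq j hj)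
end

section
/- Let I be an ideal of a right noetherian ring R such that I = aR = Rb for some elements a, b ∈ R. Then I = bR, and b is a normal element (bR = Rb). -/
/-- Let `R` be a right noetherian ring (i.e. `R` is noetherian as a
right module over itself) and let `I` be an ideal with `I = aR = Rb` for some
`a, b ∈ R`.  Then `I = bR` and `b` is normal (`bR = Rb`). -/
theorem left_right_principal {R : Type*} [Ring R] [IsNoetherian Rᵐᵒᵖ R] (a b : R)
    (h : Set.range (fun r : R => a * r) = Set.range (fun r : R => r * b)) :
    Set.range (fun r : R => a * r) = Set.range (fun r : R => b * r) ∧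
      Set.range (fun r : R => b * r) = Set.range (fun r : R => r * b) := by
  -- obtain u with u * b = a
  obtain ⟨u, hu⟩ : a ∈ Set.range (fun r : R => r * b) := h ▸ ⟨1, mul_one a⟩
  -- obtain c with a * c = b
  obtain ⟨c, hc⟩ : b ∈ Set.range (fun r : R => a * r) := h.symm ▸ ⟨1, one_mul b⟩
  replace hu : u * b = a := hu
  replace hc : a * c = b := hc
  -- the right ideal aR as a submodule over Rᵐᵒᵖ
  let S : Submodule Rᵐᵒᵖ R :=
    { carrier := Set.range (fun r : R => a * r)
      add_mem' := by rintro _ _ ⟨x, rfl⟩ ⟨y, rfl⟩; exact ⟨x + y, by simp [mul_add]⟩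
      zero_mem' := ⟨0, mul_zero a⟩
      smul_mem' := by
        rintro d _ ⟨x, rfl⟩
        exact ⟨x * d.unop, by simp [MulOpposite.smul_eq_mul_unop, mul_assoc]⟩ }
  have key : ∀ x : R, x ∈ Set.range (fun r : R => a * r) →
      u * x ∈ Set.range (fun r : R => a * r) := by
    intro x hx
    rw [h] at hx ⊢
    obtain ⟨t, ht⟩ := hx
    exact ⟨u * t, by simp only [← ht, mul_assoc]⟩
  -- left multiplication by u as a right-linear endomorphism of S
  let f : S →ₗ[Rᵐᵒᵖ] S :=
    { toFun := fun x => ⟨u * x.1, key x.1 x.2⟩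
      map_add' := by intro x y; ext; simp [mul_add]
      map_smul' := by
        intro d x; ext
        simp [MulOpposite.smul_eq_mul_unop, mul_assoc] }
  have hsurj : Function.Surjective f := by
    rintro ⟨_, r, rfl⟩
    refine ⟨⟨b * r, ⟨c * r, by show a * (c * r) = b * r; rw [← mul_assoc, hc]⟩⟩, ?_⟩
    ext
    show u * (b * r) = a * r
    rw [← mul_assoc, hu]
  have hinj : Function.Injective f :=
    IsNoetherian.injective_of_surjective_endomorphism f hsurj
  have main : Set.range (fun r : R => a * r) = Set.range (fun r : R => b * r) := by
    apply Set.eq_of_subset_of_subset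
    · rintro _ ⟨r, rfl⟩
      -- a * r ∈ Rb
      obtain ⟨t, ht⟩ : a * r ∈ Set.range (fun r : R => r * b) := h ▸ ⟨r, rfl⟩
      replace ht : t * b = a * r := ht
      -- (u*t)*b ∈ aR
      obtain ⟨s, hs⟩ : (u * t) * b ∈ Set.range (fun r : R => a * r) :=
        h.symm ▸ ⟨u * t, rfl⟩
      replace hs : a * s = u * t * b := hs
      have hbs : b * s ∈ Set.range (fun r : R => a * r) :=
        ⟨c * s, by show a * (c * s) = b * s; rw [← mul_assoc, hc]⟩
      have har : a * r ∈ Set.range (fun r : R => a * r) := ⟨r, rfl⟩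
      have : f ⟨a * r, har⟩ = f ⟨b * s, hbs⟩ := by
        ext
        show u * (a * r) = u * (b * s)
        rw [← ht, ← mul_assoc, ← mul_assoc, hu, hs]
      have := hinj this
      have : a * r = b * s := congrArg Subtype.val this
      exact ⟨s, this.symm⟩
    · rintro _ ⟨r, rfl⟩
      exact ⟨c * r, by show a * (c * r) = b * r; rw [← mul_assoc, hc]⟩
  exact ⟨main, main.symm.trans h⟩
end

section
/- Let k be a commutative noetherian ring and R an affine k-algebra. If M is a finitely generated right R-module and L ⊆ M is an R-submodule such that M/L is finitely generated as a k-module, then L is finitely generated as an R-module. -/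
open Submodule

theorem aux_artin_tate {k A M : Type*} [CommRing k] [IsNoetherianRing k]
    [Ring A] [Algebra k A] (haff : Algebra.FiniteType k A)
    [AddCommGroup M] [Module A M] [Module k M] [IsScalarTower k A M]
    [Module.Finite A M] (L : Submodule A M)
    (hML : Module.Finite k (M ⧸ L)) : L.FG := by
  classical
  obtain ⟨s, hs⟩ := haff.out
  obtain ⟨g, hg⟩ : (⊤ : Submodule A M).FG := Module.Finite.fg_top
  -- a finite set T of M whose k-span together with L is all of M
  obtain ⟨S0, hS0⟩ : (⊤ : Submodule k (M ⧸ L)).FG := Module.Finite.fg_top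
  have hsurj := Submodule.mkQ_surjective L
  set T : Finset M := S0.image (Function.surjInv hsurj) with hT
  have hTim : L.mkQ '' (T : Set M) = (S0 : Set (M ⧸ L)) := by
    ext y
    simp only [hT, Finset.coe_image, Set.image_image, Function.surjInv_eq hsurj]
    simp
  have hUL : span k (T : Set M) ⊔ L.restrictScalars k = ⊤ := by
    have hmap : Submodule.map ((L.mkQ).restrictScalars k) (span k (T : Set M)) = ⊤ := by
      rw [Submodule.map_span]
      simp only [LinearMap.coe_restrictScalars]
      rw [hTim, hS0]
    have := Submodule.comap_map_eq ((L.mkQ).restrictScalars k) (span k (T : Set M))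
    rw [hmap, Submodule.comap_top] at this
    rw [this]
    congr 1
    ext x
    simp [Submodule.Quotient.mk_eq_zero]
  -- decomposition of every element
  have hdec : ∀ x : M, ∃ u l : M, u ∈ span k (T : Set M) ∧ l ∈ L ∧ u + l = x := by
    intro x
    have hx : x ∈ span k (T : Set M) ⊔ L.restrictScalars k := hUL ▸ mem_top
    obtain ⟨u, hu, l, hl, h⟩ := Submodule.mem_sup.mp hx
    exact ⟨u, l, hu, hl, h⟩
  choose u l hu hl hul using hdec
  set X : Finset M := g ∪ (s ×ˢ T).image (fun p => p.1 • p.2) with hX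
  set L₀ : Submodule A M := span A ((X.image l : Finset M) : Set M) with hL₀
  have hL₀L : L₀ ≤ L := by
    rw [hL₀, span_le]
    intro x hx
    simp only [Finset.coe_image, Set.mem_image] at hx
    obtain ⟨y, _, rfl⟩ := hx
    exact hl y
  set S' : Submodule k M := L₀.restrictScalars k ⊔ span k (T : Set M) with hS'
  have hlX : ∀ x ∈ X, l x ∈ L₀ := fun x hx =>
    subset_span (by simp only [Finset.coe_image, Set.mem_image]; exact ⟨x, hx, rfl⟩)
  have hxS' : ∀ x ∈ X, x ∈ S' := by
    intro x hx
    rw [← hul x]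
    exact add_mem (le_sup_right (α := Submodule k M) (hu x))
      (le_sup_left (α := Submodule k M) (hlX x hx))
  -- closure of S' under the action of A
  have hclosed : ∀ (a : A) (m : M), m ∈ S' → a • m ∈ S' := by
    have key : ∀ a ∈ Algebra.adjoin k (s : Set A), ∀ m ∈ S', a • m ∈ S' := by
      intro a ha
      induction ha using Algebra.adjoin_induction with
      | mem a ha =>
        intro m hm
        obtain ⟨m₀, hm₀, m₁, hm₁, rfl⟩ := Submodule.mem_sup.mp hm
        rw [smul_add]
        refine add_mem (le_sup_left (α := Submodule k M)
          (Submodule.smul_mem L₀ a hm₀)) ?_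
        -- action of the generator on span k T
        have : a • m₁ ∈ Submodule.map (DistribMulAction.toLinearMap k M a)
            (span k (T : Set M)) := ⟨m₁, hm₁, rfl⟩
        rw [Submodule.map_span] at this
        refine span_le.mpr ?_ this
        rintro _ ⟨t, ht, rfl⟩
        have hat : a • t ∈ X := by
          rw [hX]
          refine Finset.mem_union_right _ ?_
          exact Finset.mem_image.mpr ⟨(a, t), Finset.mem_product.mpr ⟨ha, ht⟩, rfl⟩
        exact hxS' _ hat
      | algebraMap r =>
        intro m hm
        rw [algebraMap_smul]
        exact Submodule.smul_mem S' r hm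
      | add x y hx hy ihx ihy =>
        intro m hm
        rw [add_smul]
        exact add_mem (ihx m hm) (ihy m hm)
      | mul x y hx hy ihx ihy =>
        intro m hm
        rw [mul_smul]
        exact ihx _ (ihy m hm)
    intro a m hm
    exact key a (hs ▸ Algebra.mem_top) m hm
  -- S' is all of M
  have hS'top : ∀ x : M, x ∈ S' := by
    set S'' : Submodule A M :=
      { toAddSubmonoid := S'.toAddSubmonoid
        smul_mem' := fun a m hm => hclosed a m hm } with hS''
    have : (⊤ : Submodule A M) ≤ S'' := by
      rw [← hg, span_le]
      intro x hx
      exact hxS' x (hX ▸ Finset.mem_union_left _ hx)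
    exact fun x => this mem_top
  -- modularity
  have hmod : L.restrictScalars k
      = L₀.restrictScalars k ⊔ (span k (T : Set M) ⊓ L.restrictScalars k) := by
    have h1 : L₀.restrictScalars k ≤ L.restrictScalars k := hL₀L
    have h2 : (L₀.restrictScalars k ⊔ span k (T : Set M)) ⊓ L.restrictScalars k
        = L₀.restrictScalars k ⊔ (span k (T : Set M) ⊓ L.restrictScalars k) :=
      sup_inf_assoc_of_le _ h1
    rw [← h2]
    rw [show L₀.restrictScalars k ⊔ span k (T : Set M) = ⊤ from
      eq_top_iff.mpr fun x _ => hS'top x]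
    rw [top_inf_eq]
  -- the intersection is k-finitely generated
  have hfin : (span k (T : Set M) ⊓ L.restrictScalars k).FG := by
    set P : Submodule k M := span k (T : Set M) with hP
    have hPN : IsNoetherian k P :=
      isNoetherian_of_fg_of_noetherian P ⟨T, rfl⟩
    have hle : span k (T : Set M) ⊓ L.restrictScalars k ≤ P := inf_le_left
    have := (IsNoetherian.noetherian
      (Submodule.comap P.subtype (span k (T : Set M) ⊓ L.restrictScalars k))).map P.subtype
    rwa [Submodule.map_comap_subtype, inf_eq_right.mpr hle] at this
  obtain ⟨F, hF⟩ := hfin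
  -- finish
  have hFL : (F : Set M) ⊆ L := fun x hx => by
    have : x ∈ span k (F : Set M) := subset_span hx
    rw [hF] at this
    exact this.2
  have hLeq : L = L₀ ⊔ span A (F : Set M) := by
    refine le_antisymm ?_ (sup_le hL₀L (span_le.mpr hFL))
    intro x hx
    have : x ∈ L₀.restrictScalars k ⊔ (span k (T : Set M) ⊓ L.restrictScalars k) :=
      hmod ▸ hx
    rw [← hF] at this
    obtain ⟨a, ha, b, hb, rfl⟩ := Submodule.mem_sup.mp this
    exact add_mem (le_sup_left (α := Submodule A M) ha)
      (le_sup_right (α := Submodule A M) (span_le_restrictScalars k A (F : Set M) hb))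
  rw [hLeq]
  exact Submodule.FG.sup ⟨X.image l, rfl⟩ ⟨F, rfl⟩

/-- **Artin–Tate style lemma.** Let `k` be a commutative noetherian
ring and `R` an affine (finitely generated) `k`-algebra.  If `M` is a finitely
generated right `R`-module (formalized as a module over `Rᵐᵒᵖ`) and `L ⊆ M` is an
`R`-submodule such that `M/L` is finitely generated as a `k`-module, then `L` is
finitely generated as an `R`-module. -/
theorem artin_tate_submodule_fg {k R M : Type*} [CommRing k] [IsNoetherianRing k]
    [Ring R] [Algebra k R] (haff : Algebra.FiniteType k R)
    [AddCommGroup M] [Module Rᵐᵒᵖ M] [Module k M] [IsScalarTower k Rᵐᵒᵖ M]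
    [Module.Finite Rᵐᵒᵖ M] (L : Submodule Rᵐᵒᵖ M)
    (hML : Module.Finite k (M ⧸ L)) : L.FG := by
  classical
  have hop : Algebra.FiniteType k Rᵐᵒᵖ := by
    obtain ⟨s, hs⟩ := haff.out
    refine ⟨⟨s.image MulOpposite.op, ?_⟩⟩
    have h1 : ((s.image MulOpposite.op : Finset Rᵐᵒᵖ) : Set Rᵐᵒᵖ)
        = MulOpposite.unop ⁻¹' (s : Set R) := by
      ext x
      simp only [Finset.coe_image, Set.mem_image, Set.mem_preimage, Finset.mem_coe]
      constructor
      · rintro ⟨y, hy, rfl⟩; simpa using hy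
      · intro hx; exact ⟨x.unop, hx, rfl⟩
    rw [h1, ← Subalgebra.op_adjoin, hs]
    exact Subalgebra.op_top
  exact aux_artin_tate hop L hML
end
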